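/- Let n ≥ 3 and in ℂ[x_1,…,x_n] set q = x_1 + (x_2 + x_3 + ⋯ + x_n)·x_2x_3⋯x_{n−1} − x_1x_2⋯x_n. Then there is no point a ∈ ℂ^n at which all partial derivatives ∂q/∂x_i vanish; that is, grad(q) vanishes nowhere on ℂ^n. -/
import Mathlib
open MvPolynomial

lemma pderiv_prod_X {n : ℕ} (s : Finset (Fin n)) (j : Fin n) :
    pderiv j (∏ i ∈ s, (X i : MvPolynomial (Fin n) ℂ)) =
      if j ∈ s then ∏ i ∈ s.erase j, X i else 0 := by
  induction s using Finset.induction_on with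
  | empty => simp
  | @insert x s hx ih =>
    rw [Finset.prod_insert hx, pderiv_mul, ih]
    by_cases hjx : j = x
    · subst hjx
      simp [hx, Finset.erase_insert hx]
    · rw [pderiv_X_of_ne (Ne.symm hjx)]
      by_cases hjs : j ∈ s
      · rw [Finset.erase_insert_of_ne (Ne.symm hjx),
          Finset.prod_insert (show x ∉ s.erase j from fun hm => hx (Finset.mem_of_mem_erase hm))]
        simp [hjs, hjx]
      · simp [hjs, hjx]

lemma pderiv_sum_X {n : ℕ} (s : Finset (Fin n)) (j : Fin n) :
    pderiv j (∑ i ∈ s, (X i : MvPolynomial (Fin n) ℂ)) =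
      if j ∈ s then 1 else 0 := by
  rw [map_sum]
  by_cases hjs : j ∈ s
  · rw [Finset.sum_eq_single_of_mem j hjs (fun b _ hbj => pderiv_X_of_ne hbj),
      pderiv_X_self, if_pos hjs]
  · rw [if_neg hjs, Finset.sum_eq_zero fun b hb => pderiv_X_of_ne (by rintro rfl; exact hjs hb)]

/-- The gradient computation for `q` in the proof of Proposition 1.4: the gradient of
`q = x₁ + (x₂ + ⋯ + xₙ)·x₂⋯x_{n-1} - x₁⋯xₙ` vanishes nowhere on `ℂⁿ`. -/
theorem prop_1_4_gradient_q (n : ℕ) (hn : 3 ≤ n)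
    (q : MvPolynomial (Fin n) ℂ)
    (hq : q = X (⟨0, by omega⟩ : Fin n)
        + (∑ i ∈ Finset.univ.filter (fun i : Fin n => 0 < i.val), X i)
          * (∏ i ∈ Finset.univ.filter (fun i : Fin n => 0 < i.val ∧ i.val < n - 1), X i)
        - ∏ i, X i) :
    ¬ ∃ a : Fin n → ℂ, ∀ i, eval a (pderiv i q) = 0 := by
  rintro ⟨a, h⟩
  set i0 : Fin n := ⟨0, by omega⟩ with hi0def
  set lst : Fin n := ⟨n - 1, by omega⟩ with hlstdef
  set T : Finset (Fin n) := Finset.univ.filter (fun i : Fin n => 0 < i.val) with hTdef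
  set M : Finset (Fin n) :=
    Finset.univ.filter (fun i : Fin n => 0 < i.val ∧ i.val < n - 1) with hMdef
  set PM : ℂ := ∏ i ∈ M, a i with hPMdef
  set S : ℂ := ∑ i ∈ T, a i with hSdef
  -- membership facts
  have hi0T : i0 ∉ T := by simp [hTdef, hi0def]
  have hi0M : i0 ∉ M := by simp [hMdef, hi0def]
  have hlstT : lst ∈ T := by simp [hTdef, hlstdef]; omega
  have hlstM : lst ∉ M := by simp [hMdef, hlstdef]
  have hUT : Finset.univ.erase i0 = T := by
    ext i; simp [hTdef, hi0def, Fin.ext_iff]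
  have hTM : T.erase lst = M := by
    ext i
    simp only [Finset.mem_erase, hTdef, hMdef, Finset.mem_filter, Finset.mem_univ, true_and,
      hlstdef, ne_eq, Fin.ext_iff, Fin.val_mk]
    omega
  have hUM : Finset.univ.erase lst = insert i0 M := by
    ext i
    simp only [Finset.mem_erase, Finset.mem_univ, and_true, Finset.mem_insert, hMdef,
      Finset.mem_filter, true_and, hlstdef, hi0def, ne_eq, Fin.ext_iff, Fin.val_mk]
    omega
  -- the gradient formula
  have key : ∀ i : Fin n,
      (if i = i0 then (1:ℂ) else 0)
      + ((if i ∈ T then (1:ℂ) else 0) * PM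
          + S * (if i ∈ M then ∏ k ∈ M.erase i, a k else 0))
      - (∏ k ∈ Finset.univ.erase i, a k) = 0 := by
    intro i
    have hpX : (pderiv i (X i0) : MvPolynomial (Fin n) ℂ) = if i = i0 then 1 else 0 := by
      split
      · next he => rw [he, pderiv_X_self]
      · next he => rw [pderiv_X_of_ne (Ne.symm he)]
    have := h i
    rw [hq, map_sub, map_add, pderiv_mul, pderiv_sum_X, pderiv_prod_X, pderiv_prod_X,
      hpX] at this
    simpa [apply_ite (eval a), Finset.mem_univ, map_prod, map_sum] using this
  -- equation at i0 : PT = 1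
  have h0 := key i0
  rw [if_pos rfl, if_neg hi0T, if_neg hi0M, hUT] at h0
  have hPT : ∏ i ∈ T, a i = 1 := by linear_combination -h0
  -- PT = a lst * PM
  have hTins : T = insert lst M := by rw [← hTM, Finset.insert_erase hlstT]
  have hPT' : a lst * PM = 1 := by
    rw [← hPT, hTins, Finset.prod_insert hlstM, hPMdef]
  have hPM0 : PM ≠ 0 := by
    intro h'; rw [h', mul_zero] at hPT'; exact one_ne_zero hPT'.symm
  -- equation at lst : a i0 = 1
  have hlst := key lst
  have hlsti0 : lst ≠ i0 := by simp [hlstdef, hi0def, Fin.ext_iff]; omega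
  rw [if_neg hlsti0, if_pos hlstT, if_neg hlstM, hUM, Finset.prod_insert hi0M] at hlst
  have hai0 : a i0 = 1 := by
    have : PM * (1 - a i0) = 0 := by ring_nf; linear_combination hlst
    rcases mul_eq_zero.mp this with h' | h'
    · exact absurd h' hPM0
    · linear_combination -h'
  -- product over everything = 1
  have hPU : ∏ i, a i = 1 := by
    rw [← Finset.insert_erase (Finset.mem_univ i0), Finset.prod_insert (Finset.notMem_erase _ _),
      hUT, hPT, hai0, one_mul]
  -- equation for j ∈ M, multiplied by a j
  have hMeq : ∀ j ∈ M, a j * PM + S * PM = 1 := by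
    intro j hjM
    have hjT : j ∈ T := by rw [hTins]; exact Finset.mem_insert_of_mem hjM
    have hji0 : j ≠ i0 := by
      intro e; rw [e] at hjM; exact hi0M hjM
    have hj := key j
    rw [if_neg hji0, if_pos hjT, if_pos hjM] at hj
    have e1 : a j * ∏ k ∈ M.erase j, a k = PM := Finset.mul_prod_erase M a hjM
    have e2 : a j * ∏ k ∈ Finset.univ.erase j, a k = 1 := by
      rw [Finset.mul_prod_erase Finset.univ a (Finset.mem_univ j), hPU]
    linear_combination a j * hj - S * e1 + e2
  -- all coordinates in M are equal
  have hj1M : (⟨1, by omega⟩ : Fin n) ∈ M := by simp [hMdef]; omega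
  set c : ℂ := a ⟨1, by omega⟩ with hcdef
  have hconst : ∀ j ∈ M, a j = c := by
    intro j hjM
    have e1 := hMeq j hjM
    have e2 := hMeq _ hj1M
    have : (a j - c) * PM = 0 := by linear_combination e1 - e2
    rcases mul_eq_zero.mp this with h' | h'
    · linear_combination h'
    · exact absurd h' hPM0
  -- cardinality of M
  have hMcard : M.card = n - 2 := by
    have : M = Finset.Ioo i0 lst := by
      ext i
      simp only [hMdef, Finset.mem_filter, Finset.mem_univ, true_and, Finset.mem_Ioo,
        Fin.lt_def, hi0def, hlstdef]
    rw [this, Fin.card_Ioo]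
    show n - 1 - 0 - 1 = n - 2
    omega
  -- PM = c ^ (n-2), S = a lst + (n-2) c
  have hPMc : PM = c ^ (n - 2) := by
    rw [hPMdef, Finset.prod_congr rfl hconst, Finset.prod_const, hMcard]
  have hSc : S = a lst + (n - 2 : ℕ) * c := by
    rw [hSdef, hTins, Finset.sum_insert hlstM, Finset.sum_congr rfl hconst,
      Finset.sum_const, hMcard, nsmul_eq_mul]
  -- final contradiction
  have heq := hMeq _ hj1M
  rw [← hcdef, hPMc, hSc] at heq
  have hTc : a lst * c ^ (n - 2) = 1 := by rw [← hPMc]; exact hPT'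
  have hpow : c * c ^ (n - 2) = c ^ (n - 1) := by
    rw [← pow_succ']
    congr 1
    omega
  have hfin : ((n : ℂ) - 1) * c ^ (n - 1) = 0 := by
    have hcast : ((n - 2 : ℕ) : ℂ) = (n : ℂ) - 2 := by
      push_cast [Nat.cast_sub (by omega : 2 ≤ n)]; ring
    rw [hcast] at heq
    linear_combination heq - hTc - ((n:ℂ) - 2) * hpow - hpow
  have hn1 : ((n : ℂ) - 1) ≠ 0 := by
    intro h'
    have : (n : ℂ) = 1 := by linear_combination h'
    have : n = 1 := by exact_mod_cast this
    omega
  have hc0 : c = 0 := by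
    have := (mul_eq_zero.mp hfin).resolve_left hn1
    exact pow_eq_zero_iff (by omega) |>.mp this
  rw [hc0, zero_pow (by omega : n - 2 ≠ 0), mul_zero] at hTc
  exact one_ne_zero hTc.symm
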